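/- Let φ : {0,…,m+1} → ℝ satisfy ghost-cell Neumann conditions φ_0 = φ_1 and φ_{m+1} = φ_m. With the quadratic face average A^{(q)}(φ²)_{i+1/2} = (φ_{i+1}² + φ_{i+1}φ_i + φ_i²)/3 and discrete operators D, d as above, the exact discrete identity h Σ_{i=1}^m φ_i³ (Δ_hφ)_i = -3h Σ_{i=1}^{m-1} A^{(q)}(φ²)_{i+1/2} ((φ_{i+1}-φ_i)/h)² holds. -/

import Mathlib

open Finset

section SummationByParts

variable {R : Type*} [CommRing R]

theorem sum_Icc_mul_secondDiff (f g : ℕ → R) (m : ℕ) :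
    ∑ i ∈ Icc 1 (m + 1), f i * (g (i + 1) - 2 * g i + g (i - 1))
      = f (m + 1) * (g (m + 2) - g (m + 1)) - f 1 * (g 1 - g 0)
        - ∑ i ∈ Icc 1 m, (f (i + 1) - f i) * (g (i + 1) - g i) := by
  induction m with
  | zero => simp; ring
  | succ n ih =>
    rw [sum_Icc_succ_top (by omega), ih, sum_Icc_succ_top (by omega), Nat.add_sub_cancel]
    ring

theorem sum_Icc_mul_secondDiff_of_neumann (f g : ℕ → R) (m : ℕ)
    (hg₀ : g 0 = g 1) (hgₘ : g (m + 1) = g m) :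
    ∑ i ∈ Icc 1 m, f i * (g (i + 1) - 2 * g i + g (i - 1))
      = -∑ i ∈ Icc 1 (m - 1), (f (i + 1) - f i) * (g (i + 1) - g i) := by
  cases m with
  | zero => simp
  | succ n =>
    rw [sum_Icc_mul_secondDiff, hg₀, hgₘ, Nat.add_sub_cancel]
    ring

end SummationByParts

theorem discrete_cubic_sbp_identity_general
    (h : ℝ) (m : ℕ)
    (φ : ℕ → ℝ) (hφ0 : φ 0 = φ 1) (hφm : φ (m + 1) = φ m) :
    h * ∑ i ∈ Finset.Icc 1 m, φ i ^ 3 * ((φ (i + 1) - 2 * φ i + φ (i - 1)) / h ^ 2)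
      = -3 * h * ∑ i ∈ Finset.Icc 1 (m - 1),
          ((φ (i + 1) ^ 2 + φ (i + 1) * φ i + φ i ^ 2) / 3)
            * ((φ (i + 1) - φ i) / h) ^ 2 := by
  calc h * ∑ i ∈ Icc 1 m, φ i ^ 3 * ((φ (i + 1) - 2 * φ i + φ (i - 1)) / h ^ 2)
      = h / h ^ 2 * ∑ i ∈ Icc 1 m, φ i ^ 3 * (φ (i + 1) - 2 * φ i + φ (i - 1)) := by
        simp only [mul_sum]
        exact sum_congr rfl fun i _ => by ring
    _ = -(h / h ^ 2 * ∑ i ∈ Icc 1 (m - 1), (φ (i + 1) ^ 3 - φ i ^ 3) * (φ (i + 1) - φ i)) := by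
        rw [sum_Icc_mul_secondDiff_of_neumann (φ · ^ 3) φ m hφ0 hφm, mul_neg]
    _ = _ := by
        simp only [mul_sum, ← sum_neg_distrib]
        -- the discrete product rule `a³ - b³ = 3 · (a² + ab + b²)/3 · (a - b)`
        exact sum_congr rfl fun i _ => by ring

/-- Discrete analogue of `∫ φ³ Δφ = -3 ∫ φ² |∇φ|²`: for `φ` satisfying the
ghost-cell Neumann conditions `φ_0 = φ_1`, `φ_{m+1} = φ_m`, with the quadratic
face average `A^{(q)}(φ²)_{i+1/2} = (φ_{i+1}² + φ_{i+1}φ_i + φ_i²)/3` and the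
cell-centered Laplacian `(Δ_hφ)_i = (φ_{i+1} - 2φ_i + φ_{i-1})/h²`, one has
`h Σ_{i=1}^m φ_i³ (Δ_hφ)_i = -3h Σ_{i=1}^{m-1} A^{(q)}(φ²)_{i+1/2} ((φ_{i+1}-φ_i)/h)²`. -/
theorem discrete_cubic_sbp_identity
    (h : ℝ) (hh : 0 < h) (m : ℕ) (hm : 0 < m)
    (φ : ℕ → ℝ) (hφ0 : φ 0 = φ 1) (hφm : φ (m + 1) = φ m) :
    h * ∑ i ∈ Finset.Icc 1 m, φ i ^ 3 * ((φ (i + 1) - 2 * φ i + φ (i - 1)) / h ^ 2)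
      = -3 * h * ∑ i ∈ Finset.Icc 1 (m - 1),
          ((φ (i + 1) ^ 2 + φ (i + 1) * φ i + φ i ^ 2) / 3)
            * ((φ (i + 1) - φ i) / h) ^ 2 :=
  discrete_cubic_sbp_identity_general h m φ hφ0 hφm
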